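/- arXiv:1501.02381 — 2 statements merged into one kernel-verified Lean document; each statement's English description precedes it below -/
import Mathlib

section
/- Let Ω ⊂ ℂ be a domain with cl(Ω)° = Ω and {∞} ∪ (ℂ \ cl(Ω)) connected in the Riemann sphere. Then for every m ≥ 1, the compact set L'ₘ = {z : |z| ≤ m} ∩ cl(Ω) has connected complement in the Riemann sphere, and its interior equals Ω ∩ {z : |z| < m}. -/
open OnePoint Set Filter Metric

/-! The complement of `L'ₘ` in the Riemann sphere is the union of `{∞} ∪ {|z| > m}` and
`{∞} ∪ (ℂ \ cl Ω)`. The first set is connected because the exterior of a disc is, and `∞`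
lies in its closure (its complement in `ℂ` is compact); the second is connected by hypothesis,
and the two share `∞`. -/

theorem isConnected_compl_closedBall {E : Type*} [NormedAddCommGroup E] [NormedSpace ℝ E]
    (h : 1 < Module.rank ℝ E) (x : E) {r : ℝ} (hr : 0 ≤ r) :
    IsConnected (closedBall x r)ᶜ := by
  have himage :
      (fun p : E × ℝ => x + p.2 • p.1) '' (sphere 0 1 ×ˢ Ioi r) = (closedBall x r)ᶜ := by
    ext y
    simp only [mem_image, mem_prod, mem_sphere_zero_iff_norm, mem_Ioi, mem_compl_iff,
      mem_closedBall, not_le, Prod.exists]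
    constructor
    · rintro ⟨u, t, ⟨hu, ht⟩, rfl⟩
      rwa [dist_eq_norm, add_sub_cancel_left, norm_smul, hu, mul_one, Real.norm_of_nonneg
        (hr.trans ht.le)]
    · intro hy
      have hne : ‖y - x‖ ≠ 0 := by rw [← dist_eq_norm]; linarith
      refine ⟨‖y - x‖⁻¹ • (y - x), dist y x, ⟨?_, hy⟩, ?_⟩
      · rw [norm_smul, norm_inv, norm_norm, inv_mul_cancel₀ hne]
      · rw [dist_eq_norm, smul_smul, mul_inv_cancel₀ hne, one_smul, add_sub_cancel]
  rw [← himage]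
  exact ((isConnected_sphere h 0 zero_le_one).prod isConnected_Ioi).image _ (by fun_prop)

namespace OnePoint

theorem isConnected_insert_infty_image_coe {X : Type*} [TopologicalSpace X] [NoncompactSpace X]
    {s : Set X} (hs : IsConnected s) (hs_co : s ∈ coclosedCompact X) :
    IsConnected (insert ∞ ((↑) '' s : Set (OnePoint X))) := by
  have hinf : (∞ : OnePoint X) ∈ closure ((↑) '' s) :=
    mem_closure_of_tendsto tendsto_coe_infty
      (mem_of_superset hs_co fun x hx => mem_image_of_mem _ hx)
  exact (hs.image _ continuous_coe.continuousOn).subset_closure (subset_insert _ _)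
    (insert_subset hinf subset_closure)

theorem compl_image_coe_inter {X : Type*} (s t : Set X) :
    ((↑) '' (s ∩ t) : Set (OnePoint X))ᶜ =
      insert ∞ ((↑) '' sᶜ) ∪ insert ∞ ((↑) '' tᶜ) := by
  rw [compl_image_coe, compl_inter, image_union, union_singleton, insert_union_distrib]

end OnePoint

theorem closed_ball_inter_closure_props_general (Ω : Set ℂ) (hcl : interior (closure Ω) = Ω)
    (hinf : IsConnected (insert (∞ : OnePoint ℂ) ((fun z : ℂ => (z : OnePoint ℂ)) '' (closure Ω)ᶜ)))
    (m : ℕ) (hm : 1 ≤ m) :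
    IsConnected (((fun z : ℂ => (z : OnePoint ℂ)) '' (Metric.closedBall (0 : ℂ) m ∩ closure Ω))ᶜ) ∧
    interior (Metric.closedBall (0 : ℂ) m ∩ closure Ω) = Ω ∩ Metric.ball (0 : ℂ) m := by
  have hm0 : (m : ℝ) ≠ 0 := Nat.cast_ne_zero.2 (by omega)
  have hrank : 1 < Module.rank ℝ ℂ := Complex.rank_real_complex ▸ Nat.one_lt_ofNat
  have hdisc : IsConnected (insert ∞ ((↑) '' (closedBall (0 : ℂ) m)ᶜ : Set (OnePoint ℂ))) :=
    isConnected_insert_infty_image_coe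
      (isConnected_compl_closedBall hrank 0 m.cast_nonneg)
      ((isCompact_closedBall 0 _).compl_mem_coclosedCompact_of_isClosed isClosed_closedBall)
  refine ⟨?_, ?_⟩
  · rw [compl_image_coe_inter]
    exact hdisc.union ⟨∞, mem_insert _ _, mem_insert _ _⟩ hinf
  · rw [interior_inter, hcl, interior_closedBall _ hm0, inter_comm]

/-- For a domain `Ω` with `(cl Ω)° = Ω` and `{∞} ∪ (ℂ \ cl Ω)` connected in the Riemann
sphere, the compact set `L'ₘ = {|z| ≤ m} ∩ cl Ω` has connected complement in the Riemann
sphere and its interior equals `Ω ∩ {|z| < m}`. -/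
theorem closed_ball_inter_closure_props (Ω : Set ℂ) (hΩ : IsOpen Ω)
    (hconn : IsConnected Ω) (hcl : interior (closure Ω) = Ω)
    (hinf : IsConnected (insert (∞ : OnePoint ℂ) ((fun z : ℂ => (z : OnePoint ℂ)) '' (closure Ω)ᶜ)))
    (m : ℕ) (hm : 1 ≤ m) :
    IsConnected (((fun z : ℂ => (z : OnePoint ℂ)) '' (Metric.closedBall (0 : ℂ) m ∩ closure Ω))ᶜ) ∧
    interior (Metric.closedBall (0 : ℂ) m ∩ closure Ω) = Ω ∩ Metric.ball (0 : ℂ) m :=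
  closed_ball_inter_closure_props_general Ω hcl hinf m hm
end

section
/- Let Ω ⊂ ℂ be open, L ⊂ Ω compact, K ⊂ ℂ \ Ω compact, (p,q) ∈ ℕ², j, s ≥ 1, and let f_j be a fixed polynomial. Then the set F = { f ∈ H(Ω) : f ∈ D_{p,q}(ζ) for all ζ ∈ L and sup_{ζ∈L, z∈K} |[p/q]_{f,ζ}(z) − f_j(z)| < 1/s } is open in H(Ω). -/
noncomputable def aZ (a : ℕ → ℂ) (k : ℤ) : ℂ := if k < 0 then 0 else a k.toNat

noncomputable def hankelDet (a : ℕ → ℂ) (p q : ℕ) : ℂ :=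
  Matrix.det (Matrix.of fun i j : Fin q => aZ a ((p : ℤ) - q + 1 + (i : ℕ) + (j : ℕ)))

noncomputable def Spoly (a : ℕ → ℂ) (ζ : ℂ) (k : ℤ) : Polynomial ℂ :=
  if k < 0 then 0 else
    ∑ v ∈ Finset.range (k.toNat + 1), Polynomial.C (a v) * (Polynomial.X - Polynomial.C ζ) ^ v

noncomputable def padeDenomPoly (a : ℕ → ℂ) (ζ : ℂ) (p q : ℕ) : Polynomial ℂ :=
  Matrix.det (Matrix.of fun i j : Fin (q + 1) =>
    if (i : ℕ) = 0 then (Polynomial.X - Polynomial.C ζ) ^ (q - (j : ℕ))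
    else Polynomial.C (aZ a ((p : ℤ) - q + (i : ℕ) + (j : ℕ))))

noncomputable def padeNumPoly (a : ℕ → ℂ) (ζ : ℂ) (p q : ℕ) : Polynomial ℂ :=
  Matrix.det (Matrix.of fun i j : Fin (q + 1) =>
    if (i : ℕ) = 0 then
      (Polynomial.X - Polynomial.C ζ) ^ (q - (j : ℕ)) * Spoly a ζ ((p : ℤ) - q + (j : ℕ))
    else Polynomial.C (aZ a ((p : ℤ) - q + (i : ℕ) + (j : ℕ))))

noncomputable def tc (f : ℂ → ℂ) (ζ : ℂ) (v : ℕ) : ℂ := iteratedDeriv v f ζ / (v.factorial : ℂ)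

noncomputable def padeVal (f : ℂ → ℂ) (ζ : ℂ) (p q : ℕ) (z : ℂ) : ℂ :=
  (padeNumPoly (tc f ζ) ζ p q).eval z / (padeDenomPoly (tc f ζ) ζ p q).eval z

noncomputable def ratSeries (A B : Polynomial ℂ) (ζ : ℂ) : PowerSeries ℂ :=
  ((Polynomial.taylor ζ A : Polynomial ℂ) : PowerSeries ℂ) *
    ((Polynomial.taylor ζ B : Polynomial ℂ) : PowerSeries ℂ)⁻¹

def IsPade (a : ℕ → ℂ) (ζ : ℂ) (p q : ℕ) (A B : Polynomial ℂ) : Prop :=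
  A.degree ≤ (p : ℕ) ∧ B.degree ≤ (q : ℕ) ∧ B.eval ζ = 1 ∧
    ∀ v ≤ p + q, PowerSeries.coeff v (ratSeries A B ζ) = a v

/-- Membership in the set `F(Ω, K, L, p, q, j, s)`: `f` is holomorphic on `Ω`, lies in
`D_{p,q}(ζ)` for all `ζ ∈ L`, its Padé denominators have no zeros on `K`, and
`sup_{ζ∈L, z∈K} |[p/q]_{f,ζ}(z) − f_j(z)| < 1/s`. -/
def memF (Ω L K : Set ℂ) (p q s : ℕ) (fj : Polynomial ℂ) (f : ℂ → ℂ) : Prop :=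
  DifferentiableOn ℂ f Ω ∧
  (∀ ζ ∈ L, hankelDet (tc f ζ) p q ≠ 0) ∧
  (∀ ζ ∈ L, ∀ z ∈ K, (padeDenomPoly (tc f ζ) ζ p q).eval z ≠ 0) ∧
  ∃ b : ℝ, b < 1 / (s : ℝ) ∧
    ∀ ζ ∈ L, ∀ z ∈ K, ‖padeVal f ζ p q z - fj.eval z‖ ≤ b

/-!
Everything in the definition of `F` is a continuous open condition on finitely many data: the
Taylor coefficients of order `≤ p + q` of `f` at `ζ`, the centre `ζ` and the point `z`. These
coefficients depend continuously on `ζ ∈ Ω`, so over the compact sets `L` and `L × K` the conditions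
hold on a uniform `δ`-neighbourhood of the coefficients of `f`. By the Cauchy estimates on discs of
radius `r` around `L`, a function `g` uniformly `δ r ^ (p + q)`-close to `f` on the
`r`-neighbourhood of `L` has coefficients `δ`-close to those of `f`. The condition
`‖[p/q](z) - f_j(z)‖ < t` with nonzero denominator is handled in the polynomial form
`‖A(z) - f_j(z) B(z)‖ < t ‖B(z)‖`, which is open and already forces `B(z) ≠ 0`.
-/

open Metric Set Topology

section Coefficients

lemma aZ_congr {a b : ℕ → ℂ} {n : ℕ} (h : ∀ v ≤ n, a v = b v) {k : ℤ} (hk : k ≤ n) :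
    aZ a k = aZ b k := by
  unfold aZ
  split_ifs
  · rfl
  · exact h k.toNat (by omega)

lemma Spoly_congr {a b : ℕ → ℂ} {n : ℕ} (h : ∀ v ≤ n, a v = b v) (ζ : ℂ) {k : ℤ}
    (hk : k ≤ n) : Spoly a ζ k = Spoly b ζ k := by
  unfold Spoly
  split_ifs
  · rfl
  · exact Finset.sum_congr rfl fun v hv => by rw [h v (by simp at hv; omega)]

variable {a b : ℕ → ℂ} {p q : ℕ}

lemma hankelDet_congr (h : ∀ v ≤ p + q, a v = b v) : hankelDet a p q = hankelDet b p q := by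
  unfold hankelDet
  congr 1
  ext i j
  exact aZ_congr h (by have := i.2; have := j.2; push_cast; omega)

lemma padeDenomPoly_congr (h : ∀ v ≤ p + q, a v = b v) (ζ : ℂ) :
    padeDenomPoly a ζ p q = padeDenomPoly b ζ p q := by
  unfold padeDenomPoly
  congr 1
  ext i j
  simp only [Matrix.of_apply]
  rw [aZ_congr h (by have := i.2; have := j.2; push_cast; omega)]

lemma padeNumPoly_congr (h : ∀ v ≤ p + q, a v = b v) (ζ : ℂ) :
    padeNumPoly a ζ p q = padeNumPoly b ζ p q := by
  unfold padeNumPoly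
  congr 1
  ext i j
  simp only [Matrix.of_apply]
  rw [Spoly_congr h ζ (by have := j.2; push_cast; omega),
    aZ_congr h (by have := i.2; have := j.2; push_cast; omega)]

end Coefficients

noncomputable def extendZero {n : ℕ} (c : Fin n → ℂ) (v : ℕ) : ℂ :=
  if h : v < n then c ⟨v, h⟩ else 0

lemma extendZero_apply_of_lt {n : ℕ} {c : Fin n → ℂ} {a : ℕ → ℂ}
    (hc : ∀ i : Fin n, c i = a i) {v : ℕ} (hv : v < n) : extendZero c v = a v := by
  simp [extendZero, hv, hc]

@[fun_prop]
lemma continuous_extendZero (n : ℕ) : Continuous (extendZero : (Fin n → ℂ) → ℕ → ℂ) := by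
  refine continuous_pi fun v => ?_
  unfold extendZero
  split_ifs
  exacts [continuous_apply _, continuous_const]

section PadeData

variable {a : ℕ → ℂ} {p q : ℕ} {c : Fin (p + q + 1) → ℂ}

/-- `[p/q](z) - f_j(z)` is this residual divided by the Padé denominator at `z`. -/
noncomputable def padeResidual (a : ℕ → ℂ) (p q : ℕ) (ζ : ℂ) (fj : Polynomial ℂ) (z : ℂ) :
    ℂ :=
  (padeNumPoly a ζ p q).eval z - fj.eval z * (padeDenomPoly a ζ p q).eval z

lemma hankelDet_extendZero (hc : ∀ i, c i = a i) :
    hankelDet (extendZero c) p q = hankelDet a p q :=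
  hankelDet_congr fun _ hv => extendZero_apply_of_lt hc (by omega)

lemma padeDenomPoly_extendZero (hc : ∀ i, c i = a i) (ζ : ℂ) :
    padeDenomPoly (extendZero c) ζ p q = padeDenomPoly a ζ p q :=
  padeDenomPoly_congr (fun _ hv => extendZero_apply_of_lt hc (by omega)) ζ

lemma padeResidual_extendZero (hc : ∀ i, c i = a i) (ζ : ℂ) (fj : Polynomial ℂ) (z : ℂ) :
    padeResidual (extendZero c) p q ζ fj z = padeResidual a p q ζ fj z := by
  rw [padeResidual, padeResidual, padeDenomPoly_extendZero hc,
    padeNumPoly_congr (fun _ hv => extendZero_apply_of_lt hc (by omega))]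

end PadeData

lemma norm_sub_mul_lt_mul_norm_iff {A B c : ℂ} {t : ℝ} :
    ‖A - c * B‖ < t * ‖B‖ ↔ B ≠ 0 ∧ ‖A / B - c‖ < t := by
  by_cases hB : B = 0
  · simp [hB]
  · rw [← div_lt_iff₀ (norm_pos_iff.mpr hB), ← norm_div, sub_div,
      mul_div_cancel_right₀ _ hB]
    exact ⟨fun h => ⟨hB, h⟩, And.right⟩

section Continuity

@[fun_prop]
lemma continuous_aZ (k : ℤ) : Continuous fun a : ℕ → ℂ => aZ a k := by
  unfold aZ
  split_ifs
  exacts [continuous_const, continuous_apply _]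

lemma continuous_hankelDet (p q : ℕ) : Continuous fun a : ℕ → ℂ => hankelDet a p q :=
  Continuous.matrix_det (continuous_matrix fun _ _ => continuous_aZ _)

lemma continuous_eval_det {α n : Type*} [TopologicalSpace α] [Fintype n] [DecidableEq n]
    {M : α → Matrix n n (Polynomial ℂ)} {z : α → ℂ}
    (hM : ∀ i j, Continuous fun x => (M x i j).eval (z x)) :
    Continuous fun x => (M x).det.eval (z x) := by
  simp_rw [← Polynomial.coe_evalRingHom, RingHom.map_det]
  exact Continuous.matrix_det (continuous_matrix hM)

lemma continuous_eval_Spoly (k : ℤ) :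
    Continuous fun x : ((ℕ → ℂ) × ℂ) × ℂ => (Spoly x.1.1 x.1.2 k).eval x.2 := by
  unfold Spoly
  split_ifs
  · simpa using continuous_const
  · simp only [Polynomial.eval_finsetSum, Polynomial.eval_mul, Polynomial.eval_C,
      Polynomial.eval_pow, Polynomial.eval_sub, Polynomial.eval_X]
    fun_prop

variable (p q : ℕ)

lemma continuous_eval_padeDenomPoly :
    Continuous fun x : ((ℕ → ℂ) × ℂ) × ℂ => (padeDenomPoly x.1.1 x.1.2 p q).eval x.2 := by
  refine continuous_eval_det fun i j => ?_
  simp only [Matrix.of_apply]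
  split_ifs
  · simp only [Polynomial.eval_pow, Polynomial.eval_sub, Polynomial.eval_X, Polynomial.eval_C]
    fun_prop
  · simp only [Polynomial.eval_C]
    fun_prop

lemma continuous_eval_padeNumPoly :
    Continuous fun x : ((ℕ → ℂ) × ℂ) × ℂ => (padeNumPoly x.1.1 x.1.2 p q).eval x.2 := by
  refine continuous_eval_det fun i j => ?_
  simp only [Matrix.of_apply]
  split_ifs
  · simp only [Polynomial.eval_mul, Polynomial.eval_pow, Polynomial.eval_sub, Polynomial.eval_X,
      Polynomial.eval_C]
    exact (by fun_prop : Continuous fun x : ((ℕ → ℂ) × ℂ) × ℂ => (x.2 - x.1.2) ^ _).mul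
      (continuous_eval_Spoly _)
  · simp only [Polynomial.eval_C]
    fun_prop

lemma isOpen_hankelDet_extendZero_ne_zero :
    IsOpen {c : Fin (p + q + 1) → ℂ | hankelDet (extendZero c) p q ≠ 0} :=
  isOpen_compl_singleton.preimage ((continuous_hankelDet p q).comp (continuous_extendZero _))

lemma isOpen_norm_padeResidual_extendZero_lt (fj : Polynomial ℂ) (t : ℝ) :
    IsOpen {x : ((Fin (p + q + 1) → ℂ) × ℂ) × ℂ |
      ‖padeResidual (extendZero x.1.1) p q x.1.2 fj x.2‖ <
        t * ‖(padeDenomPoly (extendZero x.1.1) x.1.2 p q).eval x.2‖} := by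
  have hext : Continuous fun x : ((Fin (p + q + 1) → ℂ) × ℂ) × ℂ =>
      ((extendZero x.1.1, x.1.2), x.2) := by
    fun_prop
  have hD := (continuous_eval_padeDenomPoly p q).comp hext
  refine isOpen_lt (Continuous.norm ?_) (continuous_const.mul hD.norm)
  exact ((continuous_eval_padeNumPoly p q).comp hext).sub
    ((fj.continuous.comp continuous_snd).mul hD)

end Continuity

lemma IsCompact.exists_forall_dist_le_mem {α E : Type*} [TopologicalSpace α]
    [PseudoMetricSpace E] {S : Set α} (hS : IsCompact S) {φ : α → E} (hφ : ContinuousOn φ S)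
    {U : Set E} (hU : IsOpen U) (hSU : MapsTo φ S U) :
    ∃ δ > 0, ∀ x ∈ S, ∀ e, dist e (φ x) ≤ δ → e ∈ U := by
  obtain ⟨δ, hδ, hδU⟩ := (hS.image_of_continuousOn hφ).exists_cthickening_subset_open hU
    hSU.image_subset
  exact ⟨δ, hδ, fun x hx e he => hδU (mem_cthickening_of_dist_le e _ δ _ ⟨x, hx, rfl⟩ he)⟩

section Taylor

noncomputable def tcVec (n : ℕ) (f : ℂ → ℂ) (ζ : ℂ) : Fin n → ℂ := fun i => tc f ζ i

lemma tcVec_apply (n : ℕ) (f : ℂ → ℂ) (ζ : ℂ) (i : Fin n) : tcVec n f ζ i = tc f ζ i := rfl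

lemma continuousOn_tcVec {Ω : Set ℂ} (hΩ : IsOpen Ω) {f : ℂ → ℂ}
    (hf : DifferentiableOn ℂ f Ω) (n : ℕ) : ContinuousOn (tcVec n f) Ω := by
  refine continuousOn_pi.mpr fun v => ContinuousOn.div_const ?_ _
  exact ((hf.contDiffOn hΩ).continuousOn_iteratedDerivWithin le_rfl hΩ.uniqueDiffOn).congr
    (iteratedDerivWithin_of_isOpen hΩ).symm

lemma tc_sub {f g : ℂ → ℂ} {ζ : ℂ} {v : ℕ} (hf : ContDiffAt ℂ v f ζ)
    (hg : ContDiffAt ℂ v g ζ) :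
    tc (f - g) ζ v = tc f ζ v - tc g ζ v := by
  rw [tc, tc, tc, iteratedDeriv_sub hf hg, sub_div]

lemma norm_tc_le {h : ℂ → ℂ} {ζ : ℂ} {r C : ℝ} (hr : 0 < r)
    (hh : DiffContOnCl ℂ h (ball ζ r)) (hC : ∀ z ∈ sphere ζ r, ‖h z‖ ≤ C) (v : ℕ) :
    ‖tc h ζ v‖ ≤ C / r ^ v := by
  have hv : (0 : ℝ) < v.factorial := by positivity
  rw [tc, norm_div, Complex.norm_natCast, div_le_iff₀ hv]
  calc ‖iteratedDeriv v h ζ‖ ≤ v.factorial * C / r ^ v :=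
        Complex.norm_iteratedDeriv_le_of_forall_mem_sphere_norm_le v hr hh hC
    _ = C / r ^ v * v.factorial := by ring

lemma dist_tcVec_le {Ω : Set ℂ} (hΩ : IsOpen Ω) {f g : ℂ → ℂ} (hf : DifferentiableOn ℂ f Ω)
    (hg : DifferentiableOn ℂ g Ω) {ζ : ℂ} {r ε : ℝ} (hr : 0 < r) (hr1 : r ≤ 1)
    (hball : closedBall ζ r ⊆ Ω) (hε : ∀ z ∈ sphere ζ r, ‖f z - g z‖ ≤ ε) (n : ℕ) :
    dist (tcVec (n + 1) f ζ) (tcVec (n + 1) g ζ) ≤ ε / r ^ n := by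
  obtain ⟨z, hz⟩ := (NormedSpace.sphere_nonempty (x := ζ)).mpr hr.le
  have hε0 : 0 ≤ ε := (norm_nonneg _).trans (hε z hz)
  have hζ : Ω ∈ 𝓝 ζ := hΩ.mem_nhds (hball (mem_closedBall_self hr.le))
  refine (dist_pi_le_iff (by positivity)).mpr fun v => ?_
  have hv : (v : ℕ) ≤ n := Nat.lt_succ_iff.mp v.2
  rw [dist_eq_norm, tcVec, tcVec, ← tc_sub ((hf.contDiffOn hΩ).contDiffAt hζ)
    ((hg.contDiffOn hΩ).contDiffAt hζ)]
  calc ‖tc (f - g) ζ v‖ ≤ ε / r ^ (v : ℕ) :=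
        norm_tc_le hr ((hf.sub hg).diffContOnCl_ball hball) hε v
    _ ≤ ε / r ^ n :=
        div_le_div_of_nonneg_left hε0 (by positivity) (pow_le_pow_of_le_one hr.le hr1 hv)

end Taylor

section Stability

variable {Ω L K : Set ℂ} {f : ℂ → ℂ} {p q : ℕ}

lemma exists_forall_hankelDet_ne_zero (hΩ : IsOpen Ω) (hL : IsCompact L) (hLΩ : L ⊆ Ω)
    (hf : DifferentiableOn ℂ f Ω) (hH : ∀ ζ ∈ L, hankelDet (tc f ζ) p q ≠ 0) :
    ∃ δ > 0, ∀ ζ ∈ L, ∀ a : ℕ → ℂ,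
      dist (fun i : Fin (p + q + 1) => a i) (tcVec _ f ζ) ≤ δ → hankelDet a p q ≠ 0 := by
  obtain ⟨δ, hδ, hU⟩ := hL.exists_forall_dist_le_mem ((continuousOn_tcVec hΩ hf _).mono hLΩ)
    (isOpen_hankelDet_extendZero_ne_zero p q) fun ζ hζ => by
      rw [mem_ofPred_eq, hankelDet_extendZero (tcVec_apply _ f ζ)]
      exact hH ζ hζ
  refine ⟨δ, hδ, fun ζ hζ a ha => ?_⟩
  simpa only [mem_ofPred_eq, hankelDet_extendZero fun _ => rfl] using hU ζ hζ _ ha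

lemma exists_forall_norm_padeResidual_lt (hΩ : IsOpen Ω) (hL : IsCompact L) (hLΩ : L ⊆ Ω)
    (hK : IsCompact K) (hf : DifferentiableOn ℂ f Ω) {fj : Polynomial ℂ} {t : ℝ}
    (hR : ∀ ζ ∈ L, ∀ z ∈ K, ‖padeResidual (tc f ζ) p q ζ fj z‖ <
      t * ‖(padeDenomPoly (tc f ζ) ζ p q).eval z‖) :
    ∃ δ > 0, ∀ ζ ∈ L, ∀ z ∈ K, ∀ a : ℕ → ℂ,
      dist (fun i : Fin (p + q + 1) => a i) (tcVec _ f ζ) ≤ δ →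
        ‖padeResidual a p q ζ fj z‖ < t * ‖(padeDenomPoly a ζ p q).eval z‖ := by
  have hcf := (continuousOn_tcVec hΩ hf (p + q + 1)).mono hLΩ
  obtain ⟨δ, hδ, hU⟩ := (hL.prod hK).exists_forall_dist_le_mem
    (φ := fun x : ℂ × ℂ => ((tcVec _ f x.1, x.1), x.2))
    (((hcf.comp continuousOn_fst fun _ hx => hx.1).prodMk continuousOn_fst).prodMk
      continuousOn_snd)
    (isOpen_norm_padeResidual_extendZero_lt p q fj t) fun x hx => by
      simp only [mem_ofPred_eq]
      rw [padeResidual_extendZero (tcVec_apply _ f x.1),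
        padeDenomPoly_extendZero (tcVec_apply _ f x.1)]
      exact hR _ hx.1 _ hx.2
  refine ⟨δ, hδ, fun ζ hζ z hz a ha => ?_⟩
  have hmem := hU (ζ, z) ⟨hζ, hz⟩ ((fun i => a i, ζ), z) (by simpa [Prod.dist_eq] using ha)
  simpa only [mem_ofPred_eq, padeResidual_extendZero fun _ => rfl,
    padeDenomPoly_extendZero fun _ => rfl] using hmem

end Stability

theorem F_is_open_general (Ω L K : Set ℂ) (hΩ : IsOpen Ω)
    (hL : IsCompact L) (hLΩ : L ⊆ Ω) (hK : IsCompact K)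
    (p q s : ℕ) (fj : Polynomial ℂ) :
    ∀ f : ℂ → ℂ, memF Ω L K p q s fj f →
      ∃ Lt : Set ℂ, IsCompact Lt ∧ Lt ⊆ Ω ∧
        ∃ a > (0 : ℝ), ∀ g : ℂ → ℂ, DifferentiableOn ℂ g Ω →
          (∀ z ∈ Lt, ‖f z - g z‖ < a) → memF Ω L K p q s fj g := by
  rintro f ⟨hf, hH, hD, b, hb, hsup⟩
  obtain ⟨t, hbt, hts⟩ := exists_between hb
  obtain ⟨δ₁, hδ₁, hHg⟩ := exists_forall_hankelDet_ne_zero hΩ hL hLΩ hf hH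
  obtain ⟨δ₂, hδ₂, hRg⟩ := exists_forall_norm_padeResidual_lt hΩ hL hLΩ hK hf
    fun ζ hζ z hz =>
      norm_sub_mul_lt_mul_norm_iff.mpr ⟨hD ζ hζ z hz, (hsup ζ hζ z hz).trans_lt hbt⟩
  obtain ⟨r₀, hr₀, hLr₀⟩ := hL.exists_cthickening_subset_open hΩ hLΩ
  set r := min r₀ 1
  have hLr : cthickening r L ⊆ Ω := (cthickening_mono (min_le_left _ _) L).trans hLr₀
  have hr : 0 < r := lt_min hr₀ one_pos
  refine ⟨cthickening r L, hL.cthickening, hLr, min δ₁ δ₂ * r ^ (p + q), by positivity,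
    fun g hg hfg => ?_⟩
  have hclose : ∀ ζ ∈ L, dist (tcVec (p + q + 1) g ζ) (tcVec _ f ζ) ≤ min δ₁ δ₂ := by
    intro ζ hζ
    have hball := closedBall_subset_cthickening hζ r
    rw [dist_comm]
    refine (dist_tcVec_le hΩ hf hg hr (min_le_right _ _) (hball.trans hLr)
      (fun z hz => (hfg z (hball (sphere_subset_closedBall hz))).le) _).trans_eq ?_
    field_simp
  have hres (ζ) (hζ : ζ ∈ L) (z) (hz : z ∈ K) :
      (padeDenomPoly (tc g ζ) ζ p q).eval z ≠ 0 ∧ ‖padeVal g ζ p q z - fj.eval z‖ < t :=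
    norm_sub_mul_lt_mul_norm_iff.mp (hRg ζ hζ z hz _ ((hclose ζ hζ).trans (min_le_right _ _)))
  exact ⟨hg, fun ζ hζ => hHg ζ hζ _ ((hclose ζ hζ).trans (min_le_left _ _)),
    fun ζ hζ z hz => (hres ζ hζ z hz).1, t, hts, fun ζ hζ z hz => (hres ζ hζ z hz).2.le⟩

/-- The set `F(Ω, K, L, p, q, j, s)` is open in `H(Ω)` for the topology of uniform
convergence on compact subsets of `Ω`, expressed via the basic neighborhoods of that
topology. -/
theorem F_is_open (Ω L K : Set ℂ) (hΩ : IsOpen Ω)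
    (hL : IsCompact L) (hLΩ : L ⊆ Ω) (hK : IsCompact K) (hKΩ : K ⊆ Ωᶜ)
    (p q s : ℕ) (hs : 1 ≤ s) (fj : Polynomial ℂ) :
    ∀ f : ℂ → ℂ, memF Ω L K p q s fj f →
      ∃ Lt : Set ℂ, IsCompact Lt ∧ Lt ⊆ Ω ∧
        ∃ a > (0 : ℝ), ∀ g : ℂ → ℂ, DifferentiableOn ℂ g Ω →
          (∀ z ∈ Lt, ‖f z - g z‖ < a) → memF Ω L K p q s fj g :=
  F_is_open_general Ω L K hΩ hL hLΩ hK p q s fj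
end
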